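/- arXiv:2602.12703 — 4 statements merged into one kernel-verified Lean document; each statement's English description precedes it below -/
import Mathlib

section
/- Let σ > 0. Let a and b be independent positive real-valued random variables where a has probability density function p_a(y) = σ² y^{-1-2σ²} exp(-1/(2 y^{2σ²})) on (0, ∞) and b has probability density function p_b(y) = √(2/π) σ² y^{-1-σ²} exp(-1/(2 y^{2σ²})) on (0, ∞). Then the product a·b follows the Fréchet distribution with shape parameter σ² and scale 1, i.e. P(a·b ≤ y) = exp(-y^{-σ²}) for every y > 0. -/
/-!
Write `r = σ²` and `F(t) = exp (-1 / (2 t ^ (2r)))`. Since `p_a = F'` and `F(t) → 1` as `t → ∞`,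
`F` is the distribution function of `a`, so independence gives
`P(a b ≤ y) = ∫₀^∞ p_b(u) F(y / u) du`. The substitution `v = u ^ (-r)` turns this into
`√(2/π) ∫₀^∞ exp (-(v² + c²/v²)/2) dv = √(2/π) e^{-c} ∫₀^∞ exp (-(v - c/v)²/2) dv`
with `c = y ^ (-r)`.
The last integral is `√(π/2)` by the Cauchy–Schlömilch substitution: `w = v - c/v` maps `(0, ∞)`
onto `ℝ` with `dw = (1 + c/v²) dv`, and `v ↦ c/v` identifies the `c/v²` part with the integral
itself.
-/

open MeasureTheory ProbabilityTheory Real Set Filter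
open scoped ENNReal Topology

lemma lintegral_comp_rpow_Ioi (g : ℝ → ℝ≥0∞) {p : ℝ} (hp : p ≠ 0) :
    ∫⁻ x in Ioi 0, ENNReal.ofReal (|p| * x ^ (p - 1)) * g (x ^ p) = ∫⁻ y in Ioi 0, g y := by
  have himage : (· ^ p) '' Ioi (0 : ℝ) = Ioi 0 := by
    ext y
    refine ⟨fun ⟨x, hx, hxy⟩ => hxy ▸ rpow_pos_of_pos hx p,
      fun (hy : 0 < y) => ⟨y ^ p⁻¹, rpow_pos_of_pos hy _, ?_⟩⟩
    show (y ^ p⁻¹) ^ p = y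
    rw [← rpow_mul hy.le, inv_mul_cancel₀ hp, rpow_one]
  calc ∫⁻ x in Ioi 0, ENNReal.ofReal (|p| * x ^ (p - 1)) * g (x ^ p)
      = ∫⁻ x in Ioi 0, ENNReal.ofReal |p * x ^ (p - 1)| * g (x ^ p) := by
        refine setLIntegral_congr_fun measurableSet_Ioi fun x hx => ?_
        rw [abs_mul, abs_of_nonneg (rpow_nonneg (le_of_lt hx) _)]
    _ = ∫⁻ y in (· ^ p) '' Ioi 0, g y := by
        refine (lintegral_image_eq_lintegral_abs_deriv_mul measurableSet_Ioi
          (fun x hx => (hasDerivAt_rpow_const (Or.inl (mem_Ioi.mp hx).ne')).hasDerivWithinAt)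
          ((rpow_left_injOn hp).mono fun x (hx : 0 < x) => hx.le) g).symm
    _ = ∫⁻ y in Ioi 0, g y := by rw [himage]

lemma rpow_neg_sq {x : ℝ} (hx : 0 < x) (r : ℝ) : (x ^ (-r)) ^ 2 = (x ^ (2 * r))⁻¹ := by
  rw [← rpow_natCast, ← rpow_mul hx.le, ← rpow_neg hx.le]
  ring_nf

lemma strictMonoOn_sub_div {c : ℝ} (hc : 0 < c) : StrictMonoOn (fun v : ℝ => v - c / v) (Ioi 0) :=
  fun _ hx _ _ hxy => sub_lt_sub hxy (div_lt_div_of_pos_left hc hx hxy)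

lemma image_sub_div_Ioi {c : ℝ} (hc : 0 < c) : (fun v : ℝ => v - c / v) '' Ioi 0 = univ := by
  refine eq_univ_of_forall fun w => ?_
  -- the positive root of `v ^ 2 - w * v - c`
  set s := √(w ^ 2 + 4 * c)
  have hs : s ^ 2 = w ^ 2 + 4 * c := sq_sqrt (by positivity)
  have hv : 0 < (w + s) / 2 := by nlinarith [sqrt_nonneg (w ^ 2 + 4 * c)]
  have hcv : c / ((w + s) / 2) = (w + s) / 2 - w := by
    rw [div_eq_iff hv.ne']
    linear_combination -hs / 4
  exact ⟨(w + s) / 2, hv, by simp only [hcv]; ring⟩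

lemma image_div_Ioi {c : ℝ} (hc : 0 < c) : (fun v : ℝ => c / v) '' Ioi 0 = Ioi 0 := by
  ext x
  exact ⟨fun ⟨v, hv, hvx⟩ => hvx ▸ div_pos hc hv,
    fun hx => ⟨c / x, div_pos hc hx, div_div_cancel₀ hc.ne'⟩⟩

lemma lintegral_Ioi_comp_sub_div_add_comp_div_sub {c : ℝ} (hc : 0 < c)
    {g : ℝ → ℝ≥0∞} (hg : Measurable g) :
    (∫⁻ v in Ioi 0, g (v - c / v)) + ∫⁻ v in Ioi 0, g (c / v - v) = ∫⁻ w, g w := by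
  have hdiv : ∀ v ∈ Ioi (0 : ℝ), HasDerivAt (fun v => c / v) (-(c / v ^ 2)) v := fun v hv => by
    simpa [div_eq_mul_inv, mul_comm] using (hasDerivAt_inv (ne_of_gt hv)).const_mul c
  have hinv : ∫⁻ v in Ioi 0, g (c / v - v)
      = ∫⁻ v in Ioi 0, ENNReal.ofReal (c / v ^ 2) * g (v - c / v) := by
    conv_lhs => rw [← image_div_Ioi hc]
    rw [lintegral_image_eq_lintegral_abs_deriv_mul measurableSet_Ioi
      (fun v hv => (hdiv v hv).hasDerivWithinAt)
      (fun _ _ _ _ hxy => inv_injective (mul_left_cancel₀ hc.ne' hxy))]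
    refine setLIntegral_congr_fun measurableSet_Ioi fun v (hv : 0 < v) => ?_
    rw [abs_neg, abs_of_pos (by positivity), div_div_cancel₀ hc.ne']
  have hsub : ∫⁻ w, g w = ∫⁻ v in Ioi 0, ENNReal.ofReal (1 + c / v ^ 2) * g (v - c / v) := by
    rw [← setLIntegral_univ, ← image_sub_div_Ioi hc,
      lintegral_image_eq_lintegral_abs_deriv_mul measurableSet_Ioi
        (f' := fun v => 1 + c / v ^ 2) (fun v hv => by
          simpa only [sub_neg_eq_add] using
            ((hasDerivAt_id' v).fun_sub (hdiv v hv)).hasDerivWithinAt)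
        (strictMonoOn_sub_div hc).injOn]
    refine setLIntegral_congr_fun measurableSet_Ioi fun v (hv : 0 < v) => ?_
    rw [abs_of_pos (by positivity)]
  have hmeas : Measurable fun v => g (v - c / v) := by fun_prop
  rw [hinv, hsub, ← lintegral_add_left hmeas]
  refine setLIntegral_congr_fun measurableSet_Ioi fun v (hv : 0 < v) => ?_
  rw [ENNReal.ofReal_add zero_le_one (by positivity), ENNReal.ofReal_one, add_mul, one_mul]

lemma lintegral_exp_neg_sq_div_two :
    ∫⁻ w : ℝ, ENNReal.ofReal (exp (-(w ^ 2 / 2))) = ENNReal.ofReal √(2 * π) := by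
  have hb : ∀ w : ℝ, -(w ^ 2 / 2) = -(1 / 2) * w ^ 2 := fun w => by ring
  simp_rw [hb]
  rw [← ofReal_integral_eq_lintegral_ofReal (integrable_exp_neg_mul_sq (by norm_num))
    (ae_of_all _ fun _ => (exp_pos _).le), integral_gaussian, div_div_eq_mul_div, div_one,
    mul_comm]

lemma lintegral_Ioi_exp_neg_sub_div_sq {c : ℝ} (hc : 0 < c) :
    ∫⁻ v in Ioi 0, ENNReal.ofReal (exp (-((v - c / v) ^ 2 / 2))) = ENNReal.ofReal √(π / 2) := by
  have hsymm : ∀ v : ℝ, (c / v - v) ^ 2 = (v - c / v) ^ 2 := fun v => by ring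
  have htwice := lintegral_Ioi_comp_sub_div_add_comp_div_sub hc
    (g := fun w => ENNReal.ofReal (exp (-(w ^ 2 / 2)))) (by fun_prop)
  simp only [hsymm, ← two_mul, lintegral_exp_neg_sq_div_two] at htwice
  have hsqrt : √(2 * π) = 2 * √(π / 2) := by
    rw [show 2 * π = 2 ^ 2 * (π / 2) by ring, sqrt_mul (by norm_num), sqrt_sq zero_le_two]
  rw [hsqrt, ENNReal.ofReal_mul zero_le_two, ENNReal.ofReal_ofNat] at htwice
  exact (ENNReal.mul_right_inj two_ne_zero ENNReal.ofNat_ne_top).mp htwice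

lemma lintegral_Ioi_exp_neg_sq_add_sq_div_sq {c : ℝ} (hc : 0 < c) :
    ∫⁻ v in Ioi 0, ENNReal.ofReal (exp (-((v ^ 2 + c ^ 2 / v ^ 2) / 2)))
      = ENNReal.ofReal (√(π / 2) * exp (-c)) := by
  have hsplit : ∀ v ∈ Ioi (0 : ℝ), ENNReal.ofReal (exp (-((v ^ 2 + c ^ 2 / v ^ 2) / 2)))
      = ENNReal.ofReal (exp (-c)) * ENNReal.ofReal (exp (-((v - c / v) ^ 2 / 2))) := by
    intro v (hv : 0 < v)
    rw [← ENNReal.ofReal_mul (exp_pos _).le, ← exp_add]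
    congr 2
    field_simp
    ring
  rw [setLIntegral_congr_fun measurableSet_Ioi hsplit,
    lintegral_const_mul' _ _ ENNReal.ofReal_ne_top,
    lintegral_Ioi_exp_neg_sub_div_sq hc, ← ENNReal.ofReal_mul (exp_pos _).le, mul_comm]

lemma lintegral_withDensity_ofReal_indicator {α : Type*} [MeasurableSpace α] {μ : Measure α}
    {s : Set α} (hs : MeasurableSet s) {f : α → ℝ} (hf : Measurable f) (g : α → ℝ≥0∞) :
    ∫⁻ x, g x ∂μ.withDensity (fun x => ENNReal.ofReal (s.indicator f x))
      = ∫⁻ x in s, ENNReal.ofReal (f x) * g x ∂μ := by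
  rw [lintegral_withDensity_eq_lintegral_mul_non_measurable _ (hf.indicator hs).ennreal_ofReal
    (ae_of_all _ fun _ => ENNReal.ofReal_lt_top), ← lintegral_indicator hs]
  congr 1
  ext x
  by_cases hx : x ∈ s <;> simp [hx]

lemma ProbabilityTheory.IndepFun.measure_preimage_eq_lintegral {Ω α β : Type*}
    [MeasurableSpace Ω] [MeasurableSpace α] [MeasurableSpace β] {μ : Measure Ω} [IsFiniteMeasure μ]
    {a : Ω → α} {b : Ω → β} (ha : Measurable a) (hb : Measurable b) (hab : IndepFun a b μ)
    {S : Set (α × β)} (hS : MeasurableSet S) :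
    μ ((fun ω => (a ω, b ω)) ⁻¹' S) = ∫⁻ u, μ.map a ((fun s => (s, u)) ⁻¹' S) ∂μ.map b := by
  rw [← Measure.map_apply (ha.prodMk hb) hS,
    (indepFun_iff_map_prod_eq_prod_map_map ha.aemeasurable hb.aemeasurable).mp hab,
    Measure.prod_apply_symm hS]

-- `p_a` and `p_b` of the paper with `r = σ²`; `cdfA r` is the distribution function of `a`.
noncomputable section

def cdfA (r t : ℝ) : ℝ := exp (-(1 / (2 * t ^ (2 * r))))

def densityA (r y : ℝ) : ℝ := r * y ^ (-1 - 2 * r) * cdfA r y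

def densityB (r y : ℝ) : ℝ := √(2 / π) * r * y ^ (-1 - r) * cdfA r y

end

lemma hasDerivAt_cdfA (r : ℝ) {x : ℝ} (hx : 0 < x) : HasDerivAt (cdfA r) (densityA r x) x := by
  have hpow := ((hasDerivAt_rpow_const (p := 2 * r) (Or.inl hx.ne')).const_mul 2).fun_inv
    (by positivity)
  have := hpow.fun_neg.exp
  convert this using 1
  · ext y
    rw [cdfA, one_div]
  · rw [densityA, cdfA, one_div, rpow_sub hx, rpow_sub_one hx.ne', rpow_neg_one]
    field_simp

lemma tendsto_cdfA_atTop {r : ℝ} (hr : 0 < r) : Tendsto (cdfA r) atTop (𝓝 1) := by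
  have h : Tendsto (fun t : ℝ => 2 * t ^ (2 * r)) atTop atTop :=
    (tendsto_rpow_atTop (by positivity)).const_mul_atTop two_pos
  have h0 : Tendsto (fun t : ℝ => -(1 / (2 * t ^ (2 * r)))) atTop (𝓝 0) := by
    simpa using (tendsto_inv_atTop_zero.comp h).neg
  rw [← exp_zero]
  exact (continuous_exp.tendsto 0).comp h0

lemma cdfA_nonneg (r t : ℝ) : 0 ≤ cdfA r t := (exp_pos _).le

lemma cdfA_le_one (r : ℝ) {t : ℝ} (ht : 0 ≤ t) : cdfA r t ≤ 1 :=
  exp_le_one_iff.mpr (neg_nonpos.mpr (by positivity))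

lemma densityA_nonneg {r : ℝ} (hr : 0 ≤ r) {y : ℝ} (hy : 0 ≤ y) : 0 ≤ densityA r y :=
  mul_nonneg (mul_nonneg hr (rpow_nonneg hy _)) (cdfA_nonneg r y)

lemma densityB_nonneg {r : ℝ} (hr : 0 ≤ r) {y : ℝ} (hy : 0 ≤ y) : 0 ≤ densityB r y :=
  mul_nonneg (mul_nonneg (mul_nonneg (sqrt_nonneg _) hr) (rpow_nonneg hy _)) (cdfA_nonneg r y)

lemma measurable_densityB (r : ℝ) : Measurable (densityB r) := by
  unfold densityB cdfA
  fun_prop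

lemma lintegral_Ioi_densityA {r t : ℝ} (hr : 0 < r) (ht : 0 < t) :
    ∫⁻ x in Ioi t, ENNReal.ofReal (densityA r x) = ENNReal.ofReal (1 - cdfA r t) := by
  have hderiv : ∀ x ∈ Ici t, HasDerivAt (cdfA r) (densityA r x) x :=
    fun x hx => hasDerivAt_cdfA r (ht.trans_le hx)
  have hnonneg : ∀ x ∈ Ioi t, 0 ≤ densityA r x :=
    fun x (hx : t < x) => densityA_nonneg hr.le (ht.trans hx).le
  rw [← ofReal_integral_eq_lintegral_ofReal
      (integrableOn_Ioi_deriv_of_nonneg' hderiv hnonneg (tendsto_cdfA_atTop hr))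
      (ae_restrict_of_forall_mem measurableSet_Ioi hnonneg),
    integral_Ioi_of_hasDerivAt_of_nonneg' hderiv hnonneg (tendsto_cdfA_atTop hr)]

lemma measure_Iic_eq_cdfA {r : ℝ} (hr : 0 < r) {ν : Measure ℝ} [IsProbabilityMeasure ν]
    (hν : ν = volume.withDensity fun y => ENNReal.ofReal ((Ioi 0).indicator (densityA r) y))
    {t : ℝ} (ht : 0 < t) : ν (Iic t) = ENNReal.ofReal (cdfA r t) := by
  have htail : ν (Ioi t) = ENNReal.ofReal (1 - cdfA r t) := by
    rw [hν, withDensity_apply _ measurableSet_Ioi, ← lintegral_Ioi_densityA hr ht]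
    refine setLIntegral_congr_fun measurableSet_Ioi fun x (hx : t < x) => ?_
    rw [indicator_of_mem (mem_Ioi.mpr (ht.trans hx))]
  rw [← compl_Ioi, prob_compl_eq_one_sub measurableSet_Ioi, htail, ← ENNReal.ofReal_one,
    ← ENNReal.ofReal_sub _ (sub_nonneg.mpr (cdfA_le_one r ht.le)), sub_sub_cancel]

lemma lintegral_Ioi_densityB_mul_cdfA {r y : ℝ} (hr : 0 < r) (hy : 0 < y) :
    ∫⁻ u in Ioi 0, ENNReal.ofReal (densityB r u * cdfA r (y / u))
      = ENNReal.ofReal (exp (-(y ^ (-r)))) := by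
  set c := y ^ (-r)
  have hc : 0 < c := rpow_pos_of_pos hy _
  have hsubst : ∀ u ∈ Ioi (0 : ℝ), ENNReal.ofReal (densityB r u * cdfA r (y / u))
      = ENNReal.ofReal (|-r| * u ^ (-r - 1)) * (ENNReal.ofReal √(2 / π) *
        ENNReal.ofReal (exp (-(((u ^ (-r)) ^ 2 + c ^ 2 / (u ^ (-r)) ^ 2) / 2)))) := by
    intro u (hu : 0 < u)
    rw [← ENNReal.ofReal_mul (sqrt_nonneg _), ← ENNReal.ofReal_mul (by positivity)]
    congr 1
    rw [densityB, cdfA, cdfA, rpow_neg_sq hu, rpow_neg_sq hy, div_rpow hy.le hu.le, abs_neg,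
      abs_of_pos hr, show -1 - r = -r - 1 by ring]
    have hu' : 0 < u ^ (2 * r) := rpow_pos_of_pos hu _
    have hy' : 0 < y ^ (2 * r) := rpow_pos_of_pos hy _
    rw [mul_assoc _ (exp _), ← exp_add]
    field_simp
    ring_nf
  rw [setLIntegral_congr_fun measurableSet_Ioi hsubst,
    lintegral_comp_rpow_Ioi (fun v => ENNReal.ofReal √(2 / π) *
      ENNReal.ofReal (exp (-((v ^ 2 + c ^ 2 / v ^ 2) / 2)))) (neg_ne_zero.mpr hr.ne'),
    lintegral_const_mul' _ _ ENNReal.ofReal_ne_top, lintegral_Ioi_exp_neg_sq_add_sq_div_sq hc,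
    ← ENNReal.ofReal_mul (sqrt_nonneg _), ← mul_assoc, ← sqrt_mul (by positivity),
    div_mul_div_comm, mul_comm 2 π, div_self (by positivity), sqrt_one, one_mul]

/-- If `a` has density `p_a` and `b` has density `p_b` on `(0, ∞)` and
`a, b` are independent, then the product `a * b` is Fréchet with shape `σ²` and scale 1:
`P(a·b ≤ y) = exp (-y^{-σ²})` for all `y > 0`. -/
theorem swing_frechet_factorization
    {Ω : Type*} [MeasurableSpace Ω] (μ : Measure Ω) [IsProbabilityMeasure μ]
    (σ : ℝ) (hσ : 0 < σ)
    (a b : Ω → ℝ) (ha : Measurable a) (hb : Measurable b)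
    (hab : IndepFun a b μ)
    (hA : Measure.map a μ = volume.withDensity (fun y =>
      ENNReal.ofReal (Set.indicator (Set.Ioi (0:ℝ))
        (fun y => σ ^ 2 * y ^ (-1 - 2 * σ ^ 2) * Real.exp (-(1 / (2 * y ^ (2 * σ ^ 2))))) y)))
    (hB : Measure.map b μ = volume.withDensity (fun y =>
      ENNReal.ofReal (Set.indicator (Set.Ioi (0:ℝ))
        (fun y => Real.sqrt (2 / π) * σ ^ 2 * y ^ (-1 - σ ^ 2)
          * Real.exp (-(1 / (2 * y ^ (2 * σ ^ 2))))) y))) :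
    ∀ y : ℝ, 0 < y →
      μ {ω | a ω * b ω ≤ y} = ENNReal.ofReal (Real.exp (-(y ^ (-σ ^ 2)))) := by
  intro y hy
  have hr : 0 < σ ^ 2 := by positivity
  have := Measure.isProbabilityMeasure_map (μ := μ) ha.aemeasurable
  have hcdf : ∀ u ∈ Ioi (0 : ℝ), ENNReal.ofReal (densityB (σ ^ 2) u) * μ.map a {s | s * u ≤ y}
      = ENNReal.ofReal (densityB (σ ^ 2) u * cdfA (σ ^ 2) (y / u)) := by
    intro u (hu : 0 < u)
    have hIic : {s | s * u ≤ y} = Iic (y / u) := by ext s; exact (le_div_iff₀ hu).symm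
    rw [hIic, measure_Iic_eq_cdfA hr hA (div_pos hy hu),
      ENNReal.ofReal_mul (densityB_nonneg hr.le hu.le)]
  calc μ {ω | a ω * b ω ≤ y}
      = ∫⁻ u, μ.map a {s | s * u ≤ y} ∂μ.map b :=
        hab.measure_preimage_eq_lintegral ha hb (S := {p | p.1 * p.2 ≤ y})
          (measurableSet_le (by fun_prop) measurable_const)
    _ = ∫⁻ u in Ioi 0, ENNReal.ofReal (densityB (σ ^ 2) u) * μ.map a {s | s * u ≤ y} := by
        rw [hB]
        exact lintegral_withDensity_ofReal_indicator measurableSet_Ioi (measurable_densityB _) _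
    _ = ∫⁻ u in Ioi 0, ENNReal.ofReal (densityB (σ ^ 2) u * cdfA (σ ^ 2) (y / u)) :=
        setLIntegral_congr_fun measurableSet_Ioi hcdf
    _ = ENNReal.ofReal (exp (-(y ^ (-σ ^ 2)))) := lintegral_Ioi_densityB_mul_cdfA hr hy
end

section
/- Let σ > 0 and let p_b(y) = √(2/π) σ² y^{-1-σ²} exp(-1/(2 y^{2σ²})) for y > 0. Then for every real s with s < 1 + σ², the Mellin transform of p_b satisfies ∫₀^∞ y^{s-1} p_b(y) dy = (1/√π) · 2^{-(s-1)/(2σ²)} Γ((1-s)/(2σ²) + 1/2), where Γ is the Gamma function. -/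
/-!
The substitution `y = 1/x` turns the integrand into `x ^ (σ² - s) * exp (-x ^ (2σ²) / 2)`, a
generalized Gamma integral, which converges exactly when `σ² - s > -1`; the powers of `2` and the
factor `√(2/π) σ²` then collapse to `2 ^ (-(s-1)/(2σ²)) / √π`.
-/

open MeasureTheory Real Set

theorem integral_rpow_mul_exp_neg_mul_rpow_neg {p q b : ℝ} (hp : 0 < p) (hq : q < -1)
    (hb : 0 < b) :
    ∫ y in Ioi (0 : ℝ), y ^ q * exp (-b * y ^ (-p)) =
      b ^ ((q + 1) / p) * (1 / p) * Gamma (-(q + 1) / p) := by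
  have inversion := integral_comp_rpow_Ioi (fun y => y ^ q * exp (-b * y ^ (-p)))
    (p := -1) (by norm_num)
  rw [← inversion, setIntegral_congr_fun measurableSet_Ioi
    (g := fun x => x ^ (-q - 2) * exp (-b * x ^ p)) fun x (hx : 0 < x) => ?_]
  · rw [integral_rpow_mul_exp_neg_mul_rpow hp (by linarith) hb]
    ring_nf
  · simp only [smul_eq_mul, abs_neg, abs_one, one_mul, ← rpow_mul hx.le, neg_one_mul, neg_neg]
    rw [← mul_assoc, ← rpow_add hx]
    ring_nf

/-- Mellin transform of `p_b(y) = √(2/π) σ² y^{-1-σ²} exp (-1/(2 y^{2σ²}))`: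
for `s < 1 + σ²`, `∫₀^∞ y^{s-1} p_b(y) dy = (1/√π) 2^{-(s-1)/(2σ²)} Γ((1-s)/(2σ²) + 1/2)`. -/
theorem mellin_pb (σ : ℝ) (hσ : 0 < σ) (s : ℝ) (hs : s < 1 + σ ^ 2) :
    ∫ y in Set.Ioi (0:ℝ),
      y ^ (s - 1) * (Real.sqrt (2 / π) * σ ^ 2 * y ^ (-1 - σ ^ 2)
        * Real.exp (-(1 / (2 * y ^ (2 * σ ^ 2)))))
      = (1 / Real.sqrt π) * (2:ℝ) ^ (-(s - 1) / (2 * σ ^ 2))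
        * Real.Gamma ((1 - s) / (2 * σ ^ 2) + 1 / 2) := by
  have hσ2 : 0 < 2 * σ ^ 2 := by positivity
  have integrand_eq : ∀ y ∈ Ioi (0 : ℝ), y ^ (s - 1) * (√(2 / π) * σ ^ 2 * y ^ (-1 - σ ^ 2)
      * exp (-(1 / (2 * y ^ (2 * σ ^ 2))))) =
      √(2 / π) * σ ^ 2 * (y ^ (s - 2 - σ ^ 2) * exp (-(1 / 2) * y ^ (-(2 * σ ^ 2)))) := by
    intro y (hy : 0 < y)
    rw [rpow_neg hy.le, show s - 2 - σ ^ 2 = (s - 1) + (-1 - σ ^ 2) by ring, rpow_add hy]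
    ring_nf
  have gamma_arg : -(s - 2 - σ ^ 2 + 1) / (2 * σ ^ 2) = (1 - s) / (2 * σ ^ 2) + 1 / 2 := by
    field_simp; ring
  have half_pow : (1 / 2 : ℝ) ^ ((s - 2 - σ ^ 2 + 1) / (2 * σ ^ 2)) =
      √2 * 2 ^ (-(s - 1) / (2 * σ ^ 2)) := by
    rw [one_div, inv_rpow zero_le_two, ← rpow_neg zero_le_two, sqrt_eq_rpow, ← rpow_add two_pos]
    congr 1
    field_simp; ring
  rw [setIntegral_congr_fun measurableSet_Ioi integrand_eq, integral_const_mul,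
    integral_rpow_mul_exp_neg_mul_rpow_neg hσ2 (by linarith) one_half_pos, gamma_arg, half_pow,
    sqrt_div zero_le_two]
  field_simp
  rw [sq_sqrt zero_le_two]
end

section
/- Let N ≥ 1, let w₁, …, w_N be strictly positive real numbers, and let τ₁, …, τ_N be independent random variables each with the standard Gumbel distribution (cdf t ↦ exp(-e^{-t})). Then almost surely the index maximizing log(w_i) + τ_i over i ∈ {1, …, N} is unique, and for every j ∈ {1, …, N}, P(argmax_{i=1,…,N} (log(w_i) + τ_i) = j) = w_j / (w₁ + ⋯ + w_N). -/
/-!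
By the Gumbel cdf and independence, conditionally on `τ j = t` the index `j` beats every other
index with probability `∏_{i ≠ j} exp (-(w i / w j) e^{-t}) = exp (-b e^{-t})`, where
`b = (∑ i, w i - w j) / w j`. Integrating against the Gumbel density `e^{-t - e^{-t}}` gives
`∫ e^{-t - (1 + b) e^{-t}} dt = 1 / (1 + b) = w j / ∑ i, w i`, because `exp (-a e^{-t}) / a` is
an antiderivative of `e^{-t - a e^{-t}}`. These probabilities add up to one while every outcome
has at least one maximizer, so almost surely the maximizer is unique.
-/

open MeasureTheory ProbabilityTheory Real Set Filter Topology Finset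

theorem integrable_of_hasDerivAt_of_nonneg {g g' : ℝ → ℝ} {l₁ l₂ : ℝ}
    (hderiv : ∀ x, HasDerivAt g (g' x) x) (hcont : Continuous g') (hnonneg : ∀ x, 0 ≤ g' x)
    (hbot : Tendsto g atBot (𝓝 l₁)) (htop : Tendsto g atTop (𝓝 l₂)) : Integrable g' := by
  refine integrable_of_intervalIntegral_norm_tendsto (l₂ - l₁) (fun _ => hcont.integrableOn_Ioc)
    tendsto_neg_atTop_atBot tendsto_id ?_
  have hFTC : ∀ i : ℝ, ∫ x in -i..id i, ‖g' x‖ = g i - g (-i) := fun i => by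
    simp_rw [Real.norm_of_nonneg (hnonneg _)]
    exact intervalIntegral.integral_eq_sub_of_hasDerivAt (fun x _ => hderiv x)
      (hcont.intervalIntegrable _ _)
  simp_rw [hFTC]
  exact htop.sub (hbot.comp tendsto_neg_atTop_atBot)

section GumbelIntegrals

variable {a : ℝ}

theorem hasDerivAt_exp_neg_mul_exp_neg_div (ha : a ≠ 0) (t : ℝ) :
    HasDerivAt (fun t => exp (-(a * exp (-t))) / a) (exp (-t - a * exp (-t))) t := by
  have hinner : HasDerivAt (fun t => -(a * exp (-t))) (a * exp (-t)) t := by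
    simpa using ((hasDerivAt_neg t).exp.const_mul a).fun_neg
  refine (hinner.exp.div_const a).congr_deriv ?_
  rw [sub_eq_neg_add, exp_add]
  field_simp

theorem tendsto_exp_neg_mul_exp_neg_atTop (a : ℝ) :
    Tendsto (fun t => exp (-(a * exp (-t)))) atTop (𝓝 1) := by
  have h : Tendsto (fun t => -(a * exp (-t))) atTop (𝓝 0) := by
    simpa using ((tendsto_exp_atBot.comp tendsto_neg_atTop_atBot).const_mul a).neg
  simpa [Function.comp_def] using (continuous_exp.tendsto 0).comp h

theorem tendsto_exp_neg_mul_exp_neg_atBot (ha : 0 < a) :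
    Tendsto (fun t => exp (-(a * exp (-t)))) atBot (𝓝 0) :=
  tendsto_exp_atBot.comp <| tendsto_neg_atTop_atBot.comp <|
    (tendsto_exp_atTop.comp tendsto_neg_atBot_atTop).const_mul_atTop ha

theorem integrable_exp_neg_sub_mul_exp_neg (ha : 0 < a) :
    Integrable fun t => exp (-t - a * exp (-t)) :=
  integrable_of_hasDerivAt_of_nonneg (hasDerivAt_exp_neg_mul_exp_neg_div ha.ne') (by fun_prop)
    (fun _ => (exp_pos _).le) ((tendsto_exp_neg_mul_exp_neg_atBot ha).div_const a)
    ((tendsto_exp_neg_mul_exp_neg_atTop a).div_const a)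

theorem integral_exp_neg_sub_mul_exp_neg (ha : 0 < a) :
    ∫ t, exp (-t - a * exp (-t)) = a⁻¹ := by
  simpa using integral_of_hasDerivAt_of_tendsto (hasDerivAt_exp_neg_mul_exp_neg_div ha.ne')
    (integrable_exp_neg_sub_mul_exp_neg ha) ((tendsto_exp_neg_mul_exp_neg_atBot ha).div_const a)
    ((tendsto_exp_neg_mul_exp_neg_atTop a).div_const a)

theorem integral_Iic_exp_neg_sub_mul_exp_neg (ha : 0 < a) (c : ℝ) :
    ∫ t in Iic c, exp (-t - a * exp (-t)) = exp (-(a * exp (-c))) / a := by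
  simpa using integral_Iic_of_hasDerivAt_of_tendsto'
    (fun t _ => hasDerivAt_exp_neg_mul_exp_neg_div ha.ne' t)
    (integrable_exp_neg_sub_mul_exp_neg ha).integrableOn
    ((tendsto_exp_neg_mul_exp_neg_atBot ha).div_const a)

end GumbelIntegrals

noncomputable def gumbelMeasure : Measure ℝ :=
  volume.withDensity fun t => ENNReal.ofReal (exp (-t - exp (-t)))

theorem lintegral_exp_neg_mul_exp_neg_gumbelMeasure {b : ℝ} (hb : 0 ≤ b) :
    ∫⁻ t, ENNReal.ofReal (exp (-(b * exp (-t)))) ∂gumbelMeasure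
      = ENNReal.ofReal (1 + b)⁻¹ := by
  have hprod : ∀ t, ENNReal.ofReal (exp (-t - exp (-t))) * ENNReal.ofReal (exp (-(b * exp (-t))))
      = ENNReal.ofReal (exp (-t - (1 + b) * exp (-t))) := fun t => by
    rw [← ENNReal.ofReal_mul (exp_pos _).le, ← exp_add]
    ring_nf
  have hpos : 0 < 1 + b := by linarith
  rw [gumbelMeasure, lintegral_withDensity_eq_lintegral_mul₀ (by fun_prop) (by fun_prop)]
  simp only [Pi.mul_apply, hprod]
  rw [← ofReal_integral_eq_lintegral_ofReal (integrable_exp_neg_sub_mul_exp_neg hpos)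
    (ae_of_all _ fun _ => (exp_pos _).le), integral_exp_neg_sub_mul_exp_neg hpos]

instance : IsProbabilityMeasure gumbelMeasure :=
  ⟨by simpa using lintegral_exp_neg_mul_exp_neg_gumbelMeasure le_rfl⟩

theorem gumbelMeasure_Iic (c : ℝ) : gumbelMeasure (Iic c) = ENNReal.ofReal (exp (-exp (-c))) := by
  have hint := integrable_exp_neg_sub_mul_exp_neg one_pos
  have hcdf := integral_Iic_exp_neg_sub_mul_exp_neg one_pos c
  simp only [one_mul, div_one] at hint hcdf
  rw [gumbelMeasure, withDensity_apply _ measurableSet_Iic, ← hcdf,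
    ofReal_integral_eq_lintegral_ofReal hint.integrableOn (ae_of_all _ fun _ => (exp_pos _).le)]

theorem pi_gumbelMeasure_pi_Iic {ι : Type*} [Fintype ι] (c : ι → ℝ) :
    Measure.pi (fun _ : ι => gumbelMeasure) (univ.pi fun i => Iic (c i))
      = ENNReal.ofReal (exp (-∑ i, exp (-c i))) := by
  rw [Measure.pi_pi]
  simp_rw [gumbelMeasure_Iic]
  rw [← ENNReal.ofReal_prod_of_nonneg (fun _ _ => (exp_pos _).le), ← exp_sum, sum_neg_distrib]

theorem map_eq_gumbelMeasure {Ω : Type*} [MeasurableSpace Ω] {μ : Measure Ω}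
    [IsFiniteMeasure μ] {X : Ω → ℝ} (hX : AEMeasurable X μ)
    (hcdf : ∀ t, μ {ω | X ω ≤ t} = ENNReal.ofReal (exp (-exp (-t)))) :
    μ.map X = gumbelMeasure :=
  Measure.ext_of_Iic _ _ fun c => by
    rw [Measure.map_apply_of_aemeasurable hX measurableSet_Iic, gumbelMeasure_Iic]
    exact hcdf c

theorem map_eq_pi_gumbelMeasure {Ω ι : Type*} [MeasurableSpace Ω] {μ : Measure Ω} [Fintype ι]
    {τ : ι → Ω → ℝ} (hmeas : ∀ i, AEMeasurable (τ i) μ) (hindep : iIndepFun τ μ)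
    (hcdf : ∀ i t, μ {ω | τ i ω ≤ t} = ENNReal.ofReal (exp (-exp (-t)))) :
    μ.map (fun ω i => τ i ω) = Measure.pi fun _ => gumbelMeasure := by
  have := hindep.isProbabilityMeasure
  rw [hindep.map_fun_eq_pi_map hmeas]
  exact congrArg _ (funext fun i => map_eq_gumbelMeasure (hmeas i) (hcdf i))

def argmaxSet {ι : Type*} (c : ι → ℝ) (j : ι) : Set (ι → ℝ) :=
  {x | ∀ i, c i + x i ≤ c j + x j}

theorem measurableSet_argmaxSet {ι : Type*} [Countable ι] (c : ι → ℝ) (j : ι) :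
    MeasurableSet (argmaxSet c j) := by
  simp only [argmaxSet, ofPred_forall]
  exact .iInter fun i => measurableSet_le (by fun_prop) (by fun_prop)

theorem exists_mem_argmaxSet {ι : Type*} [Fintype ι] [Nonempty ι] (c x : ι → ℝ) :
    ∃ j, x ∈ argmaxSet c j := by
  obtain ⟨j, -, hj⟩ := exists_max_image univ (fun i => c i + x i) univ_nonempty
  exact ⟨j, fun i => hj i (mem_univ i)⟩

theorem pi_gumbelMeasure_argmaxSet_log {N : ℕ} (w : Fin N → ℝ) (hw : ∀ i, 0 < w i)
    (j : Fin N) :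
    Measure.pi (fun _ : Fin N => gumbelMeasure) (argmaxSet (fun i => log (w i)) j)
      = ENNReal.ofReal (w j / ∑ i, w i) := by
  obtain ⟨n, rfl⟩ : ∃ n, N = n + 1 := Nat.exists_eq_add_one.mpr j.pos
  set S := ∑ i, w i
  have hrest : ∑ k, w (j.succAbove k) = S - w j := by
    simp only [S, Fin.sum_univ_succAbove w j]; ring
  set B : Set (ℝ × (Fin n → ℝ)) :=
    {p | ∀ k, p.2 k ≤ p.1 + (log (w j) - log (w (j.succAbove k)))}
  have hB : MeasurableSet B := by
    simp only [B, ofPred_forall]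
    exact .iInter fun k => measurableSet_le (by fun_prop) (by fun_prop)
  have hpre : argmaxSet (fun i => log (w i)) j
      = MeasurableEquiv.piFinSuccAbove (fun _ => ℝ) j ⁻¹' B := by
    ext x
    simp only [argmaxSet, Fin.forall_iff_succAbove j, Std.le_refl, true_and, mem_ofPred_eq,
      MeasurableEquiv.piFinSuccAbove_apply, preimage_ofPred_eq, Fin.insertNthEquiv_symm_apply,
      Fin.removeNth, B]
    exact forall_congr' fun k => by constructor <;> intro h <;> linarith
  have hsection : ∀ t, Measure.pi (fun _ : Fin n => gumbelMeasure) (Prod.mk t ⁻¹' B)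
      = ENNReal.ofReal (exp (-((S - w j) / w j * exp (-t)))) := fun t => by
    have hpi : Prod.mk t ⁻¹' B
        = univ.pi fun k => Iic (t + (log (w j) - log (w (j.succAbove k)))) := by
      ext y; simp [B, Pi.le_def]
    have hexp : ∀ k, exp (-(t + (log (w j) - log (w (j.succAbove k)))))
        = exp (-t) * (w (j.succAbove k) / w j) := fun k => by
      rw [neg_add, exp_add, neg_sub, exp_sub, exp_log (hw _), exp_log (hw j)]
    rw [hpi, pi_gumbelMeasure_pi_Iic]
    simp_rw [hexp]
    rw [← mul_sum, ← sum_div, hrest, mul_comm]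
  rw [hpre, (measurePreserving_piFinSuccAbove _ j).measure_preimage_equiv,
    Measure.prod_apply hB]
  simp_rw [hsection]
  have hwS : w j ≤ S := single_le_sum (fun i _ => (hw i).le) (mem_univ j)
  rw [lintegral_exp_neg_mul_exp_neg_gumbelMeasure (div_nonneg (by linarith) (hw j).le),
    show 1 + (S - w j) / w j = S / w j by field_simp [(hw j).ne']; ring, inv_div]

theorem ae_existsUnique_mem_of_sum_measure_eq {Ω ι : Type*} [MeasurableSpace Ω] {μ : Measure Ω}
    [IsFiniteMeasure μ] [Fintype ι] {A : ι → Set Ω} (hA : ∀ i, MeasurableSet (A i))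
    (hcover : ∀ ω, ∃ i, ω ∈ A i) (hsum : ∑ i, μ (A i) = μ univ) :
    ∀ᵐ ω ∂μ, ∃! i, ω ∈ A i := by
  -- `f ω` counts the sets containing `ω`; it is `≥ 1` with integral `μ univ`, so `f = 1` a.e.
  set f : Ω → ENNReal := fun ω => ∑ i, (A i).indicator 1 ω
  have hf : Measurable f := Finset.measurable_sum _ fun i _ => measurable_one.indicator (hA i)
  have hone_le : ∀ ω, 1 ≤ f ω := fun ω => by
    obtain ⟨i, hi⟩ := hcover ω
    calc 1 = (A i).indicator 1 ω := (indicator_of_mem hi 1).symm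
      _ ≤ f ω :=
        single_le_sum (f := fun i => (A i).indicator 1 ω) (fun _ _ => zero_le) (mem_univ i)
  have hf_eq : (fun _ => 1) =ᵐ[μ] f := by
    refine ae_eq_of_ae_le_of_lintegral_le (ae_of_all _ hone_le) (by simp) hf.aemeasurable ?_
    simp only [f]
    rw [lintegral_finsetSum _ fun i _ => measurable_one.indicator (hA i)]
    simp [lintegral_indicator_one (hA _), hsum]
  filter_upwards [hf_eq] with ω hω
  obtain ⟨i, hi⟩ := hcover ω
  refine ⟨i, hi, fun j hj => by_contra fun hji => ?_⟩
  have htwo : (A j).indicator 1 ω + (A i).indicator 1 ω ≤ f ω :=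
    add_le_sum (f := fun i => (A i).indicator 1 ω) (fun _ _ => zero_le) (mem_univ j)
      (mem_univ i) hji
  rw [indicator_of_mem hi, indicator_of_mem hj, ← hω] at htwo
  norm_num at htwo

theorem gumbel_max_trick_general
    {Ω : Type*} [MeasurableSpace Ω] (μ : Measure Ω)
    (N : ℕ) (hN : 1 ≤ N)
    (w : Fin N → ℝ) (hw : ∀ i, 0 < w i)
    (τ : Fin N → Ω → ℝ) (hmeas : ∀ i, Measurable (τ i))
    (hindep : iIndepFun τ μ)
    (hcdf : ∀ i, ∀ t : ℝ,
      μ {ω | τ i ω ≤ t} = ENNReal.ofReal (Real.exp (-Real.exp (-t)))) :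
    μ {ω | ∃! j : Fin N, ∀ i : Fin N,
        Real.log (w i) + τ i ω ≤ Real.log (w j) + τ j ω} = 1 ∧
    ∀ j : Fin N,
      μ {ω | ∀ i : Fin N, Real.log (w i) + τ i ω ≤ Real.log (w j) + τ j ω}
        = ENNReal.ofReal (w j / ∑ i, w i) := by
  have := hindep.isProbabilityMeasure
  have : Nonempty (Fin N) := ⟨⟨0, hN⟩⟩
  let A j := (fun ω i => τ i ω) ⁻¹' argmaxSet (fun i => log (w i)) j
  have hτ : Measurable fun ω i => τ i ω := measurable_pi_lambda _ hmeas
  have hA : ∀ j, μ (A j) = ENNReal.ofReal (w j / ∑ i, w i) := fun j => by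
    rw [← Measure.map_apply hτ (measurableSet_argmaxSet _ j),
      map_eq_pi_gumbelMeasure (fun i => (hmeas i).aemeasurable) hindep hcdf,
      pi_gumbelMeasure_argmaxSet_log w hw j]
  have hsum : ∑ j, μ (A j) = μ univ := by
    have hS : 0 < ∑ i, w i := sum_pos (fun i _ => hw i) univ_nonempty
    simp_rw [hA]
    rw [← ENNReal.ofReal_sum_of_nonneg fun j _ => (div_pos (hw j) hS).le, ← sum_div,
      div_self hS.ne', ENNReal.ofReal_one, measure_univ]
  have hunique : ∀ᵐ ω ∂μ, ∃! j, ω ∈ A j :=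
    ae_existsUnique_mem_of_sum_measure_eq (fun j => hτ (measurableSet_argmaxSet _ j))
      (fun ω => exists_mem_argmaxSet _ _) hsum
  refine ⟨?_, hA⟩
  rw [← measure_univ (μ := μ)]
  exact measure_congr (ae_eq_univ.mpr (ae_iff.mp hunique))

/-- Gumbel-max trick: for positive weights `w₁, …, w_N` and i.i.d. standard
Gumbel noises `τ₁, …, τ_N`, almost surely the maximizer of `log (w i) + τ i` is unique, and
each `j` is the maximizer with probability `w j / ∑ i, w i`. -/
theorem gumbel_max_trick
    {Ω : Type*} [MeasurableSpace Ω] (μ : Measure Ω) [IsProbabilityMeasure μ]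
    (N : ℕ) (hN : 1 ≤ N)
    (w : Fin N → ℝ) (hw : ∀ i, 0 < w i)
    (τ : Fin N → Ω → ℝ) (hmeas : ∀ i, Measurable (τ i))
    (hindep : iIndepFun τ μ)
    (hcdf : ∀ i, ∀ t : ℝ,
      μ {ω | τ i ω ≤ t} = ENNReal.ofReal (Real.exp (-Real.exp (-t)))) :
    μ {ω | ∃! j : Fin N, ∀ i : Fin N,
        Real.log (w i) + τ i ω ≤ Real.log (w j) + τ j ω} = 1 ∧
    ∀ j : Fin N,
      μ {ω | ∀ i : Fin N, Real.log (w i) + τ i ω ≤ Real.log (w j) + τ j ω}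
        = ENNReal.ofReal (w j / ∑ i, w i) :=
  gumbel_max_trick_general μ N hN w hw τ hmeas hindep hcdf
end

section
/- Let d ≥ 1, σ > 0, and x, y ∈ ℝ^d. Let ω be a standard Gaussian random vector in ℝ^d (mean 0, identity covariance). Then E[ exp(-‖x‖²/σ²) exp(⟨ω, x⟩/σ) · exp(-‖y‖²/σ²) exp(⟨ω, y⟩/σ) ] = exp(-‖x - y‖²/(2σ²)). In particular, the positive random feature map η₊(u) = exp(-‖u‖²/σ² + ⟨ω, u⟩/σ) gives an unbiased one-sample estimator of the Gaussian kernel: E[η₊(x) η₊(y)] = exp(-‖x - y‖²/(2σ²)). -/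
/-!
The product of the two features is `exp (-(‖x‖² + ‖y‖²)/σ²) · exp ⟨(x + y)/σ, ω⟩`. The coordinates of
`ω` are independent standard Gaussians, so by the Gaussian moment generating function the second
factor has expectation `exp (‖x + y‖²/(2σ²))`, and `‖x + y‖²/2 - ‖x‖² - ‖y‖² = -‖x - y‖²/2`.
-/

open MeasureTheory ProbabilityTheory Real

open scoped NNReal

theorem integral_exp_sum_mul_pi_gaussianReal {ι : Type*} [Fintype ι] (μ : ℝ) (v : ℝ≥0)
    (a : ι → ℝ) :
    ∫ ω : ι → ℝ, exp (∑ i, a i * ω i) ∂(Measure.pi fun _ ↦ gaussianReal μ v)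
      = exp (∑ i, (μ * a i + v * a i ^ 2 / 2)) := by
  simp_rw [exp_sum]
  rw [integral_fintype_prod_eq_prod (fun i t ↦ exp (a i * t))]
  exact Finset.prod_congr rfl fun i _ ↦ congrFun mgf_id_gaussianReal (a i)

theorem positive_random_features_unbiased_general
    (d : ℕ) (σ : ℝ) (x y : Fin d → ℝ) :
    ∫ ω : Fin d → ℝ,
      (Real.exp (-(∑ i, (x i) ^ 2) / σ ^ 2) * Real.exp ((∑ i, ω i * x i) / σ)) *
      (Real.exp (-(∑ i, (y i) ^ 2) / σ ^ 2) * Real.exp ((∑ i, ω i * y i) / σ))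
      ∂(Measure.pi fun _ : Fin d => gaussianReal 0 1)
    = Real.exp (-(∑ i, (x i - y i) ^ 2) / (2 * σ ^ 2)) := by
  have integrand_eq (ω : Fin d → ℝ) :
      (exp (-(∑ i, x i ^ 2) / σ ^ 2) * exp ((∑ i, ω i * x i) / σ)) *
        (exp (-(∑ i, y i ^ 2) / σ ^ 2) * exp ((∑ i, ω i * y i) / σ))
      = exp (∑ i, -(x i ^ 2 + y i ^ 2) / σ ^ 2) * exp (∑ i, (x i + y i) / σ * ω i) := by
    simp only [← exp_add]
    congr 1
    simp only [Finset.sum_div, neg_div, ← Finset.sum_neg_distrib, ← Finset.sum_add_distrib]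
    exact Finset.sum_congr rfl fun i _ ↦ by ring
  simp_rw [integrand_eq]
  rw [integral_const_mul, integral_exp_sum_mul_pi_gaussianReal, ← exp_add,
    ← Finset.sum_add_distrib, neg_div, Finset.sum_div, ← Finset.sum_neg_distrib]
  congr 1
  exact Finset.sum_congr rfl fun i _ ↦ by rw [NNReal.coe_one]; ring

/-- positive random features give an unbiased one-sample estimator of the
Gaussian kernel: for `ω ~ N(0, I_d)` standard Gaussian in `ℝ^d`,
`E[η₊(x) η₊(y)] = exp (-‖x-y‖²/(2σ²))` where `η₊(u) = exp (-‖u‖²/σ² + ⟨ω, u⟩/σ)`. -/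
theorem positive_random_features_unbiased
    (d : ℕ) (hd : 1 ≤ d) (σ : ℝ) (hσ : 0 < σ) (x y : Fin d → ℝ) :
    ∫ ω : Fin d → ℝ,
      (Real.exp (-(∑ i, (x i) ^ 2) / σ ^ 2) * Real.exp ((∑ i, ω i * x i) / σ)) *
      (Real.exp (-(∑ i, (y i) ^ 2) / σ ^ 2) * Real.exp ((∑ i, ω i * y i) / σ))
      ∂(Measure.pi fun _ : Fin d => gaussianReal 0 1)
    = Real.exp (-(∑ i, (x i - y i) ^ 2) / (2 * σ ^ 2)) :=
  positive_random_features_unbiased_general d σ x y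
end
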